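/- Let P be a regular poset on [n] and i ∈ [n-1] with i and i+1 incomparable in P. Suppose there exists x ∈ [n], x ∉ {i, i+1}, that is comparable to exactly one of i and i+1 in P. Then the poset s_i · P obtained by swapping labels i and i+1 is not regular. -/

import Mathlib

/-- The adjacent transposition `s_i` of `Fin n` (0-indexed), swapping `i` and `i+1`. -/
def adj (n i : ℕ) (h : i + 1 < n) : Equiv.Perm (Fin n) :=
  Equiv.swap ⟨i, Nat.lt_of_succ_lt h⟩ ⟨i + 1, h⟩

/-- A poset with ground set `Fin n` (`[n]`, 0-indexed). -/
structure FinPoset (n : ℕ) where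
  le : Fin n → Fin n → Prop
  refl : ∀ a, le a a
  trans : ∀ a b c, le a b → le b c → le a c
  antisymm : ∀ a b, le a b → le b a → a = b

/-- `Σ_L(P)`: the permutations `σ` with `σ(i) ≤ σ(j)` whenever `i ≼_P j`. -/
def SigmaL {n : ℕ} (P : FinPoset n) : Set (Equiv.Perm (Fin n)) :=
  {σ | ∀ i j : Fin n, P.le i j → σ i ≤ σ j}

/-- `P` is regular: whenever `x ≼_P z` and `y` lies strictly between `x` and `z` in the
integer order, `x ≼_P y` or `y ≼_P z`. -/
def Regular {n : ℕ} (P : FinPoset n) : Prop :=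
  ∀ x y z : Fin n, P.le x z → ((x < y ∧ y < z) ∨ (z < y ∧ y < x)) →
    P.le x y ∨ P.le y z

/-- The poset `σ · P`, obtained by relabelling: `i ≼ j` iff `σ⁻¹(i) ≼_P σ⁻¹(j)`. -/
def permPoset {n : ℕ} (σ : Equiv.Perm (Fin n)) (P : FinPoset n) : FinPoset n where
  le i j := P.le (σ⁻¹ i) (σ⁻¹ j)
  refl _ := P.refl _
  trans _ _ _ h1 h2 := P.trans _ _ _ h1 h2
  antisymm _ _ h1 h2 := σ⁻¹.injective (P.antisymm _ _ h1 h2)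

/-- `b` covers `a` in `P`. -/
def Covers {n : ℕ} (P : FinPoset n) (a b : Fin n) : Prop :=
  a ≠ b ∧ P.le a b ∧ ¬ ∃ c, c ≠ a ∧ c ≠ b ∧ P.le a c ∧ P.le c b

/-- `a` and `b` are comparable in `P`. -/
def Cmp {n : ℕ} (P : FinPoset n) (a b : Fin n) : Prop :=
  P.le a b ∨ P.le b a

/-!
In a regular poset, if `y` lies strictly between `x` and `z` in the integer order and `y`, `z`
are incomparable, then `x` comparable to `z` forces `x` comparable to `y`. For `x` outside the
interval `[i, i+1]` this says that `x` comparable to the farther of `i, i+1` is comparable to the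
nearer one. Swapping the labels `i` and `i+1` exchanges the two, so if `s_i · P` were regular as
well, `x` would be comparable to both or to neither.
-/

theorem Cmp.symm {n : ℕ} {P : FinPoset n} {a b : Fin n} (h : Cmp P a b) : Cmp P b a :=
  Or.symm h

theorem cmp_permPoset_swap {n : ℕ} (P : FinPoset n) (a b u v : Fin n) :
    Cmp (permPoset (Equiv.swap a b) P) u v ↔ Cmp P (Equiv.swap a b u) (Equiv.swap a b v) := by
  simp only [Cmp, permPoset, Equiv.swap_inv]

theorem Regular.cmp_of_between {n : ℕ} {P : FinPoset n} (hP : Regular P) {x y z : Fin n}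
    (hxyz : (x < y ∧ y < z) ∨ (z < y ∧ y < x)) (hyz : ¬ Cmp P y z) (hxz : Cmp P x z) :
    Cmp P x y := by
  rcases hxz with hxz | hzx
  · exact (hP x y z hxz hxyz).elim Or.inl fun hyz' => absurd (Or.inl hyz') hyz
  · exact (hP z y x hzx hxyz.symm).elim (fun hzy => absurd (Or.inr hzy) hyz) Or.inr

theorem Regular.cmp_iff_of_regular_permPoset_swap {n : ℕ} {P : FinPoset n} {a b x : Fin n}
    (hP : Regular P) (hQ : Regular (permPoset (Equiv.swap a b) P)) (hab : a < b)
    (hinc : ¬ Cmp P a b) (hx : x < a ∨ b < x) :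
    Cmp P x a ↔ Cmp P x b := by
  have hsx : Equiv.swap a b x = x :=
    Equiv.swap_apply_of_ne_of_ne (by rintro rfl; omega) (by rintro rfl; omega)
  have hQinc : ¬ Cmp (permPoset (Equiv.swap a b) P) a b := by
    rw [cmp_permPoset_swap, Equiv.swap_apply_left, Equiv.swap_apply_right]
    exact fun hba => hinc hba.symm
  have hQa : Cmp (permPoset (Equiv.swap a b) P) x a ↔ Cmp P x b := by
    rw [cmp_permPoset_swap, hsx, Equiv.swap_apply_left]
  have hQb : Cmp (permPoset (Equiv.swap a b) P) x b ↔ Cmp P x a := by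
    rw [cmp_permPoset_swap, hsx, Equiv.swap_apply_right]
  rcases hx with hxa | hbx
  · exact ⟨fun hxa' => hQa.1 (hQ.cmp_of_between (Or.inl ⟨hxa, hab⟩) hQinc (hQb.2 hxa')),
      hP.cmp_of_between (Or.inl ⟨hxa, hab⟩) hinc⟩
  · exact ⟨hP.cmp_of_between (Or.inr ⟨hab, hbx⟩) fun hba => hinc hba.symm,
      fun hxb => hQb.1 (hQ.cmp_of_between (Or.inr ⟨hab, hbx⟩) (fun hba => hQinc hba.symm)
        (hQa.2 hxb))⟩

/-- Let `P` be a regular poset on `[n]` with `i` and `i+1` incomparable,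
and suppose some `x ∉ {i, i+1}` is comparable to exactly one of `i` and `i+1`.
Then `s_i · P` is not regular. -/
theorem stmt9 (n : ℕ) (P : FinPoset n) (hP : Regular P) (i : ℕ) (h : i + 1 < n)
    (hinc : ¬ Cmp P ⟨i, Nat.lt_of_succ_lt h⟩ ⟨i + 1, h⟩)
    (x : Fin n) (hx₁ : x ≠ ⟨i, Nat.lt_of_succ_lt h⟩) (hx₂ : x ≠ ⟨i + 1, h⟩)
    (hone : (Cmp P x ⟨i, Nat.lt_of_succ_lt h⟩ ∧ ¬ Cmp P x ⟨i + 1, h⟩) ∨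
            (¬ Cmp P x ⟨i, Nat.lt_of_succ_lt h⟩ ∧ Cmp P x ⟨i + 1, h⟩)) :
    ¬ Regular (permPoset (adj n i h) P) := by
  intro hQ
  have hx : x < ⟨i, Nat.lt_of_succ_lt h⟩ ∨ (⟨i + 1, h⟩ : Fin n) < x := by
    simp only [ne_eq, Fin.ext_iff] at hx₁ hx₂
    simp only [Fin.lt_def]
    omega
  have hiff := hP.cmp_iff_of_regular_permPoset_swap hQ (Fin.mk_lt_mk.2 i.lt_succ_self) hinc hx
  rcases hone with ⟨hxa, hxb⟩ | ⟨hxa, hxb⟩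
  exacts [hxb (hiff.1 hxa), hxa (hiff.2 hxb)]
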